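/- Given a state c of a CRN, there exists a state d reachable from c such that the set of species present in d equals the set of all possible species P(c) (the union over all states reachable from c of the species present), and moreover P(d) = P(c). -/

import Mathlib

/-- A flux vector `u` is applicable at state `c` if every reaction with positive
flux has all of its reactants present (positive concentration) in `c`. -/
def Applicable {σ ρ : Type} (react : ρ → σ → ℕ) (u : ρ → ℝ) (c : σ → ℝ) : Prop :=
  ∀ r, 0 < u r → ∀ s, 0 < react r s → 0 < c s

/-- Net change of species `s` caused by applying flux vector `u`
(the stoichiometry matrix applied to `u`). -/
noncomputable def StoichAct {σ ρ : Type} [Fintype ρ] (react prod : ρ → σ → ℕ)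
    (u : ρ → ℝ) (s : σ) : ℝ :=
  ∑ r, u r * ((prod r s : ℝ) - (react r s : ℝ))

/-- State `d` is straight-line reachable from `c` via flux vector `u`. -/
def SLReach {σ ρ : Type} [Fintype ρ] (react prod : ρ → σ → ℕ)
    (u : ρ → ℝ) (c d : σ → ℝ) : Prop :=
  (∀ r, 0 ≤ u r) ∧ Applicable react u c ∧ (∀ s, 0 ≤ d s) ∧
    ∀ s, d s = c s + StoichAct react prod u s

/-- Flux vector `u` consumes species `s`. -/
def Consumes {σ ρ : Type} (react : ρ → σ → ℕ) (u : ρ → ℝ) (s : σ) : Prop :=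
  ∃ r, 0 < u r ∧ 0 < react r s

/-- Flux vector `u` produces species `s`. -/
def Produces {σ ρ : Type} (prod : ρ → σ → ℕ) (u : ρ → ℝ) (s : σ) : Prop :=
  ∃ r, 0 < u r ∧ 0 < prod r s

/-- `u1` is independent of `u2`: `u1` consumes no species produced or consumed by `u2`. -/
def Independent {σ ρ : Type} (react prod : ρ → σ → ℕ) (u1 u2 : ρ → ℝ) : Prop :=
  ∀ s, Consumes react u1 s → ¬ Consumes react u2 s ∧ ¬ Produces prod u2 s

/-- Reachability: a finite sequence of straight-line segments. -/
def Reach {σ ρ : Type} [Fintype ρ] (react prod : ρ → σ → ℕ) (c d : σ → ℝ) : Prop :=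
  Relation.ReflTransGen (fun x y => ∃ u, SLReach react prod u x y) c d

/-- The set of species present (with positive concentration) in state `d`. -/
def Present {σ : Type} (d : σ → ℝ) : Set σ := {s | 0 < d s}

/-- The set of possible species: species present in some state reachable from `c`. -/
def Possible {σ ρ : Type} [Fintype ρ] (react prod : ρ → σ → ℕ) (c : σ → ℝ) : Set σ :=
  ⋃ d ∈ {d | Reach react prod c d}, Present d

/-!
Reachability is invariant under scaling by `a ≥ 0` and under adding a nonnegative state, so the
states reachable from `c = a • c + b • c` form a convex set: run a path `c ⟶ d₁` scaled by `a`, then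
a path `c ⟶ d₂` scaled by `b`. A convex combination with positive weights of nonnegative states has
as support the union of their supports, so finitely many witnesses, one for each possible species,
combine into a single reachable state in which every possible species is present.
-/

section Reachability

variable {σ ρ : Type} [Fintype ρ] {react prod : ρ → σ → ℕ}

lemma stoichAct_smul (a : ℝ) (u : ρ → ℝ) (s : σ) :
    StoichAct react prod (a • u) s = a * StoichAct react prod u s := by
  simp only [StoichAct, Pi.smul_apply, smul_eq_mul, Finset.mul_sum, mul_assoc]

lemma SLReach.smul {u : ρ → ℝ} {x y : σ → ℝ} {a : ℝ} (ha : 0 ≤ a)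
    (h : SLReach react prod u x y) : SLReach react prod (a • u) (a • x) (a • y) := by
  obtain ⟨hu, happ, hy, hxy⟩ := h
  refine ⟨fun r => mul_nonneg ha (hu r), fun r hr s hs => ?_, fun s => mul_nonneg ha (hy s),
    fun s => ?_⟩
  · have hur : 0 < u r := pos_of_mul_pos_right hr ha
    exact mul_pos (pos_of_mul_pos_left hr hur.le) (happ r hur s hs)
  · simp only [Pi.smul_apply, smul_eq_mul, stoichAct_smul, hxy s]
    ring

lemma SLReach.add_right {u : ρ → ℝ} {x y z : σ → ℝ} (hz : ∀ s, 0 ≤ z s)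
    (h : SLReach react prod u x y) : SLReach react prod u (x + z) (y + z) := by
  obtain ⟨hu, happ, hy, hxy⟩ := h
  refine ⟨hu, fun r hr s hs => add_pos_of_pos_of_nonneg (happ r hr s hs) (hz s),
    fun s => add_nonneg (hy s) (hz s), fun s => ?_⟩
  simp only [Pi.add_apply, hxy s]
  ring

lemma Reach.smul {x y : σ → ℝ} {a : ℝ} (ha : 0 ≤ a) (h : Reach react prod x y) :
    Reach react prod (a • x) (a • y) :=
  Relation.ReflTransGen.lift (a • ·) (fun _ _ ⟨u, hu⟩ => ⟨a • u, hu.smul ha⟩) _ _ h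

lemma Reach.add_right {x y z : σ → ℝ} (hz : ∀ s, 0 ≤ z s) (h : Reach react prod x y) :
    Reach react prod (x + z) (y + z) :=
  Relation.ReflTransGen.lift (· + z) (fun _ _ ⟨u, hu⟩ => ⟨u, hu.add_right hz⟩) _ _ h

lemma Reach.nonneg {x y : σ → ℝ} (hx : ∀ s, 0 ≤ x s) (h : Reach react prod x y) :
    ∀ s, 0 ≤ y s := by
  induction h with
  | refl => exact hx
  | tail _ hstep => exact hstep.choose_spec.2.2.1

lemma convex_setOf_reach {c : σ → ℝ} (hc : ∀ s, 0 ≤ c s) :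
    Convex ℝ {d | Reach react prod c d} := by
  intro d₁ hd₁ d₂ hd₂ a b ha hb hab
  have hbc : ∀ s, 0 ≤ (b • c) s := fun s => mul_nonneg hb (hc s)
  have had₁ : ∀ s, 0 ≤ (a • d₁) s := fun s => mul_nonneg ha (hd₁.nonneg hc s)
  have first : Reach react prod c (a • d₁ + b • c) := by
    simpa only [← add_smul, hab, one_smul] using (hd₁.smul ha).add_right hbc
  have second : Reach react prod (a • d₁ + b • c) (a • d₁ + b • d₂) := by
    simpa only [add_comm (a • d₁)] using (hd₂.smul hb).add_right had₁
  exact first.trans second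

lemma present_subset_possible_of_reach {c d : σ → ℝ} (h : Reach react prod c d) :
    Present d ⊆ Possible react prod c :=
  Set.subset_biUnion_of_mem (u := Present) h

lemma present_subset_possible (d : σ → ℝ) : Present d ⊆ Possible react prod d :=
  present_subset_possible_of_reach Relation.ReflTransGen.refl

lemma possible_subset_of_reach {c d : σ → ℝ} (h : Reach react prod c d) :
    Possible react prod d ⊆ Possible react prod c :=
  Set.iUnion₂_subset fun _ he => present_subset_possible_of_reach (h.trans he)

lemma exists_reach_forall_pos {c : σ → ℝ} (hc : ∀ s, 0 ≤ c s) (S : Finset σ)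
    (hS : ↑S ⊆ Possible react prod c) : ∃ d, Reach react prod c d ∧ ∀ s ∈ S, 0 < d s := by
  classical
  induction S using Finset.induction_on with
  | empty => exact ⟨c, Relation.ReflTransGen.refl, by simp⟩
  | insert t S _ ih =>
    rw [Finset.coe_insert, Set.insert_subset_iff] at hS
    obtain ⟨d, hd, hdS⟩ := ih hS.2
    obtain ⟨e, he, het⟩ := Set.mem_iUnion₂.mp hS.1
    have hmid := convex_setOf_reach hc hd he (by norm_num : (0 : ℝ) ≤ 1 / 2)
      (by norm_num : (0 : ℝ) ≤ 1 / 2) (by norm_num)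
    refine ⟨_, hmid, fun s hs => ?_⟩
    have hd₀ := hd.nonneg hc s
    have he₀ := he.nonneg hc s
    simp only [Pi.add_apply, Pi.smul_apply, smul_eq_mul]
    rcases Finset.mem_insert.mp hs with rfl | hs
    · have : 0 < e s := het
      linarith
    · linarith [hdS s hs]

end Reachability

/-- There is a state `d` reachable from `c` whose present species are exactly the
possible species of `c`, and moreover `Possible d = Possible c`. -/
theorem exists_all_possible {σ ρ : Type} [Fintype σ] [Fintype ρ]
    (react prod : ρ → σ → ℕ) (c : σ → ℝ) (hc : ∀ s, 0 ≤ c s) :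
    ∃ d : σ → ℝ, Reach react prod c d ∧ Present d = Possible react prod c ∧
      Possible react prod d = Possible react prod c := by
  obtain ⟨d, hd, hpos⟩ := exists_reach_forall_pos hc (Set.toFinite (Possible react prod c)).toFinset
    (by rw [Set.Finite.coe_toFinset])
  have hpresent : Present d = Possible react prod c :=
    (present_subset_possible_of_reach hd).antisymm fun s hs =>
      hpos s ((Set.Finite.mem_toFinset _).mpr hs)
  refine ⟨d, hd, hpresent, (possible_subset_of_reach hd).antisymm ?_⟩
  exact hpresent ▸ present_subset_possible d
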